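/- Let z be a standard bivariate normal vector, φ ∈ (0, π), w > 0, and E(φ) the open cone of half-angle φ/2 about the positive z₂-axis. Then P( sup_{u ∈ E(φ)} |u·z|/‖u‖ < w ) = (φ/π)·F₂(w²) + (2/π)·∫_{φ/2}^{π/2} F₂( w² / cos²(θ - φ/2) ) dθ, where F₂ is the cdf of the chi-squared distribution with 2 degrees of freedom. -/

import Mathlib

open MeasureTheory ProbabilityTheory Set Real

/-- Dot product on ℝ². -/
def dot2 (u z : ℝ × ℝ) : ℝ := u.1 * z.1 + u.2 * z.2

/-- Euclidean norm on ℝ². -/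
noncomputable def nrm2 (u : ℝ × ℝ) : ℝ := Real.sqrt (u.1 ^ 2 + u.2 ^ 2)

/-- The open cone of half-angle `φ/2` about the positive `z₂`-axis. -/
noncomputable def coneE (φ : ℝ) : Set (ℝ × ℝ) :=
  {u : ℝ × ℝ | u ≠ 0 ∧ u.2 > nrm2 u * Real.cos (φ / 2)}

/-- The cdf of the chi-squared distribution with 2 degrees of freedom:
`F₂(t) = 1 - e^{-t/2}` for `t ≥ 0`. -/
noncomputable def chi2cdf (t : ℝ) : ℝ := 1 - Real.exp (-(t / 2))

/-! Write `z = ρ (cos θ, sin θ)`. The unit vectors of the cone are `(sin t, cos t)` with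
`|t| < φ/2`, and `|u·z| = ρ |sin (t + θ)|`, so the supremum is `ρ` times the cosine of the angle
between the line `ℝ z` and the cone, `coneProfile φ θ`. The event is thus the star-shaped region
`ρ < w / coneProfile φ θ`; since `∫₀ᴿ ρ e^{-ρ²/2} dρ = F₂(R²)`, its Gaussian measure is
`(2π)⁻¹ ∫ F₂(w² / coneProfile φ θ ²) dθ`. The symmetries `θ ↦ -θ` and `θ ↦ π - θ` reduce this to a
quarter turn, on which, measured from the `z₂`-axis, the profile is `1` up to `φ/2` and
`cos (θ - φ/2)` beyond. -/

lemma chi2cdf_nonneg {t : ℝ} (ht : 0 ≤ t) : 0 ≤ chi2cdf t := by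
  rw [chi2cdf, sub_nonneg, exp_le_one_iff, neg_nonpos]
  positivity

@[fun_prop]
lemma continuous_chi2cdf : Continuous chi2cdf := by
  unfold chi2cdf; fun_prop

lemma integral_mul_exp_neg_sq_div_two (b : ℝ) :
    ∫ x in 0..b, x * exp (-(x ^ 2 / 2)) = chi2cdf (b ^ 2) := by
  have hderiv : ∀ x ∈ uIcc 0 b,
      HasDerivAt (fun x => -exp (-(x ^ 2 / 2))) (x * exp (-(x ^ 2 / 2))) x := by
    intro x _
    refine (((hasDerivAt_pow 2 x).div_const 2).neg.exp.neg).congr_deriv ?_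
    simp only [Pi.neg_apply]
    ring
  rw [intervalIntegral.integral_eq_sub_of_hasDerivAt hderiv
    (Continuous.intervalIntegrable (by fun_prop) _ _), chi2cdf]
  simp only [ne_eq, OfNat.ofNat_ne_zero, not_false_eq_true, zero_pow, zero_div, neg_zero, exp_zero,
    sub_neg_eq_add]
  ring

lemma lintegral_Ioi_indicator_Iio_mul_exp {R : ℝ} (hR : 0 ≤ R) :
    ∫⁻ ρ in Ioi 0, (Iio R).indicator (fun ρ => ENNReal.ofReal (ρ * exp (-(ρ ^ 2 / 2)))) ρ =
      ENNReal.ofReal (chi2cdf (R ^ 2)) := by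
  rw [lintegral_indicator measurableSet_Iio, Measure.restrict_restrict measurableSet_Iio,
    Iio_inter_Ioi, ← ofReal_integral_eq_lintegral_ofReal, ← integral_Ioc_eq_integral_Ioo,
    ← intervalIntegral.integral_of_le hR, integral_mul_exp_neg_sq_div_two]
  · exact (Continuous.integrableOn_Icc (by fun_prop)).mono_set Ioo_subset_Icc_self
  · filter_upwards [ae_restrict_mem measurableSet_Ioo] with ρ hρ
    exact mul_nonneg hρ.1.le (exp_pos _).le

lemma polarCoord_symm_polarCoord (z : ℝ × ℝ) : polarCoord.symm (polarCoord z) = z := by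
  have h := Complex.norm_mul_cos_arg (Complex.equivRealProd.symm z)
  have h' := Complex.norm_mul_sin_arg (Complex.equivRealProd.symm z)
  rw [Complex.norm_def, Complex.normSq_apply] at h h'
  ext <;> simp_all [polarCoord_apply, polarCoord_symm_apply, sq]

lemma measurable_polarCoord : Measurable polarCoord :=
  (by fun_prop : Measurable fun q : ℝ × ℝ => √(q.1 ^ 2 + q.2 ^ 2)).prodMk
    (Complex.measurable_arg.comp Complex.equivRealProdCLM.symm.continuous.measurable)

lemma gaussianReal_prod_eq_withDensity :
    (gaussianReal 0 1).prod (gaussianReal 0 1) = volume.withDensity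
      fun z : ℝ × ℝ => ENNReal.ofReal ((2 * π)⁻¹ * exp (-((z.1 ^ 2 + z.2 ^ 2) / 2))) := by
  rw [gaussianReal_of_var_ne_zero 0 one_ne_zero,
    prod_withDensity (measurable_gaussianPDF 0 1) (measurable_gaussianPDF 0 1),
    ← Measure.volume_eq_prod]
  congr with z
  rw [gaussianPDF, gaussianPDF, ← ENNReal.ofReal_mul (gaussianPDFReal_nonneg _ _ _)]
  congr 1
  simp only [gaussianPDFReal, NNReal.coe_one, mul_one, sub_zero]
  rw [mul_mul_mul_comm, ← Real.exp_add, ← mul_inv, Real.mul_self_sqrt (by positivity)]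
  ring_nf

lemma gaussianReal_prod_preimage_polarCoord {R : ℝ → ℝ} (hR : Measurable R)
    (hR0 : ∀ θ, 0 ≤ R θ) :
    ((gaussianReal 0 1).prod (gaussianReal 0 1) (polarCoord ⁻¹' {p | p.1 < R p.2})).toReal =
      (2 * π)⁻¹ * ∫ θ in -π..π, chi2cdf (R θ ^ 2) := by
  set T : Set (ℝ × ℝ) := {p | p.1 < R p.2}
  have hT : MeasurableSet T := measurableSet_lt measurable_fst (hR.comp measurable_snd)
  have hS : MeasurableSet (polarCoord ⁻¹' T) := measurable_polarCoord hT
  set g : ℝ × ℝ → ENNReal := T.indicator fun p => ENNReal.ofReal (p.1 * exp (-(p.1 ^ 2 / 2)))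
  have hg : Measurable g := (Measurable.ennreal_ofReal (by fun_prop)).indicator hT
  have hpolar : ∀ p ∈ polarCoord.target, ENNReal.ofReal p.1 • (polarCoord ⁻¹' T).indicator
      (fun z : ℝ × ℝ => ENNReal.ofReal ((2 * π)⁻¹ * exp (-((z.1 ^ 2 + z.2 ^ 2) / 2))))
        (polarCoord.symm p) = ENNReal.ofReal (2 * π)⁻¹ * g p := by
    intro p hp
    have hmem : polarCoord.symm p ∈ polarCoord ⁻¹' T ↔ p ∈ T := by
      rw [mem_preimage, polarCoord.right_inv hp]
    simp only [g]
    by_cases hpT : p ∈ T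
    · rw [indicator_of_mem (hmem.2 hpT), indicator_of_mem hpT, smul_eq_mul,
        ← ENNReal.ofReal_mul hp.1.le, ← ENNReal.ofReal_mul (by positivity)]
      congr 1
      simp only [polarCoord_symm_apply, mul_pow, ← mul_add, cos_sq_add_sin_sq, mul_one]
      ring
    · rw [indicator_of_notMem (mt hmem.1 hpT), indicator_of_notMem hpT, smul_zero, mul_zero]
  rw [gaussianReal_prod_eq_withDensity, withDensity_apply _ hS, ← lintegral_indicator hS,
    ← lintegral_comp_polarCoord_symm, setLIntegral_congr_fun polarCoord.open_target.measurableSet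
      hpolar, lintegral_const_mul _ hg, polarCoord_target, Measure.volume_eq_prod,
    ← Measure.prod_restrict, lintegral_prod_symm _ hg.aemeasurable]
  have hinner : ∀ θ, ∫⁻ ρ in Ioi 0, g (ρ, θ) = ENNReal.ofReal (chi2cdf (R θ ^ 2)) := fun θ =>
    lintegral_Ioi_indicator_Iio_mul_exp (hR0 θ)
  simp_rw [hinner]
  rw [ENNReal.toReal_mul, ENNReal.toReal_ofReal (by positivity),
    ← integral_eq_lintegral_of_nonneg_ae, intervalIntegral.integral_of_le (by linarith [pi_pos]),
    integral_Ioc_eq_integral_Ioo]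
  · exact ae_of_all _ fun θ => chi2cdf_nonneg (sq_nonneg _)
  · exact (by fun_prop : Measurable fun θ => chi2cdf (R θ ^ 2)).aestronglyMeasurable

lemma exists_abs_sin_add_eq_abs_cos_sub (θ : ℝ) :
    ∃ s, |s| ≤ π / 2 ∧ ∀ t, |sin (t + θ)| = |cos (t - s)| := by
  set k := ⌊θ / π⌋
  have hk : (k : ℝ) * π ≤ θ := (le_div_iff₀ pi_pos).1 (Int.floor_le _)
  have hk' : θ < (k + 1) * π := (div_lt_iff₀ pi_pos).1 (Int.lt_floor_add_one _)
  refine ⟨π / 2 - θ + k * π, abs_le.2 ⟨by linarith, by linarith⟩, fun t => ?_⟩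
  rw [← cos_sub_pi_div_two, show t + θ - π / 2 = t - (π / 2 - θ + k * π) + k * π by ring,
    cos_add_int_mul_pi, abs_mul, abs_zpow, abs_neg, abs_one, one_zpow, one_mul]

lemma abs_cos_sub_le_cos_max {a s t : ℝ} (ha : a ≤ π / 2) (hs : |s| ≤ π / 2) (ht : |t| ≤ a) :
    |cos (t - s)| ≤ cos (max (|s| - a) 0) := by
  have hc : 0 ≤ max (|s| - a) 0 := le_max_right _ _
  have hts : |t - s| ≤ |t| + |s| := abs_sub _ _
  have hst : |s| - |t| ≤ |t - s| := by simpa [abs_sub_comm] using abs_sub_abs_le_abs_sub s t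
  rw [abs_le', ← cos_abs (t - s), ← cos_pi_sub]
  constructor
  · exact cos_le_cos_of_nonneg_of_le_pi hc (by linarith) (max_le (by linarith) (abs_nonneg _))
  · exact cos_le_cos_of_nonneg_of_le_pi hc (by linarith [abs_nonneg (t - s)])
      (max_le (by linarith) (by linarith))

lemma exists_mem_Icc_abs_cos_sub_eq {a s : ℝ} (ha : 0 ≤ a) (hs : |s| ≤ π / 2) :
    ∃ t ∈ Icc (-a) a, |cos (t - s)| = cos (max (|s| - a) 0) := by
  rcases le_or_gt |s| a with hsa | hsa
  · refine ⟨s, abs_le.1 hsa, ?_⟩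
    rw [max_eq_right (by linarith), sub_self, cos_zero, abs_one]
  have hcos : 0 ≤ cos (|s| - a) := cos_nonneg_of_mem_Icc ⟨by linarith, by linarith⟩
  rw [max_eq_left (by linarith)]
  rcases le_or_gt 0 s with hs0 | hs0
  · refine ⟨a, ⟨by linarith, le_rfl⟩, ?_⟩
    rw [abs_of_nonneg hs0] at hcos ⊢
    rw [← cos_neg, neg_sub]
    exact abs_of_nonneg hcos
  · refine ⟨-a, ⟨le_rfl, by linarith⟩, ?_⟩
    rw [abs_of_neg hs0] at hcos ⊢
    rw [show -a - s = -s - a by ring]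
    exact abs_of_nonneg hcos

lemma isLUB_abs_cos_sub_image_Ioo {a s : ℝ} (ha : 0 < a) (ha' : a ≤ π / 2) (hs : |s| ≤ π / 2) :
    IsLUB ((fun t => |cos (t - s)|) '' Ioo (-a) a) (cos (max (|s| - a) 0)) := by
  obtain ⟨t₀, ht₀, heq⟩ := exists_mem_Icc_abs_cos_sub_eq ha.le hs
  refine isLUB_of_mem_closure ?_ ?_
  · rintro _ ⟨t, ht, rfl⟩
    exact abs_cos_sub_le_cos_max ha' hs (abs_le.2 ⟨ht.1.le, ht.2.le⟩)
  · rw [← heq]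
    apply image_closure_subset_closure_image (by fun_prop)
    rw [closure_Ioo (by linarith)]
    exact mem_image_of_mem _ ht₀

lemma isLUB_abs_sin_add_image_Ioo {a : ℝ} (ha : 0 < a) (ha' : a ≤ π / 2) (θ : ℝ) :
    IsLUB ((fun t => |sin (t + θ)|) '' Ioo (-a) a) (cos (max (arccos |sin θ| - a) 0)) := by
  obtain ⟨s, hs, hsin⟩ := exists_abs_sin_add_eq_abs_cos_sub θ
  have hsinθ : |sin θ| = cos |s| := by
    simpa [cos_abs, abs_of_nonneg (cos_nonneg_of_mem_Icc (abs_le.1 hs))] using hsin 0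
  rw [hsinθ, arccos_cos (abs_nonneg s) (by linarith)]
  simp_rw [hsin]
  exact isLUB_abs_cos_sub_image_Ioo ha ha' hs

lemma nrm2_pos {u : ℝ × ℝ} (hu : u ≠ 0) : 0 < nrm2 u := by
  refine sqrt_pos.2 ?_
  rcases ne_or_eq u.1 0 with h | h
  · positivity
  · have : u.2 ≠ 0 := fun h' => hu (Prod.ext h h')
    positivity

lemma nrm2_mul_sin_mul_cos {r : ℝ} (hr : 0 ≤ r) (t : ℝ) : nrm2 (r * sin t, r * cos t) = r := by
  rw [nrm2, mul_pow, mul_pow, ← mul_add, sin_sq_add_cos_sq, mul_one, sqrt_sq hr]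

lemma coneE_eq_image {φ : ℝ} (hφ0 : 0 ≤ φ) (hφπ : φ ≤ π) :
    coneE φ = (fun p : ℝ × ℝ => (p.1 * sin p.2, p.1 * cos p.2)) ''
      Ioi 0 ×ˢ Ioo (-(φ / 2)) (φ / 2) := by
  have hcosφ : 0 ≤ cos (φ / 2) := cos_nonneg_of_mem_Icc ⟨by linarith, by linarith⟩
  ext u
  constructor
  · rintro ⟨hu0, hu⟩
    set r := nrm2 u
    have hr : 0 < r := nrm2_pos hu0
    have hr2 : r ^ 2 = u.1 ^ 2 + u.2 ^ 2 := sq_sqrt (by positivity)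
    have hu2 : 0 < u.2 := (mul_nonneg hr.le hcosφ).trans_lt hu
    have hu1 : |u.1 / r| ≤ 1 := by
      rw [abs_div, abs_of_pos hr, div_le_one hr, ← sqrt_sq_eq_abs]
      exact sqrt_le_sqrt (by nlinarith)
    set t := arcsin (u.1 / r)
    have hsin : sin t = u.1 / r := sin_arcsin (abs_le.1 hu1).1 (abs_le.1 hu1).2
    have hcos : cos t = u.2 / r := by
      rw [cos_arcsin, show 1 - (u.1 / r) ^ 2 = (u.2 / r) ^ 2 by field_simp; linarith,
        sqrt_sq (by positivity)]
    have ht : |t| < φ / 2 := by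
      by_contra! ht
      have ht' : |t| ≤ π / 2 :=
        abs_le.2 ⟨neg_pi_div_two_le_arcsin (u.1 / r), arcsin_le_pi_div_two (u.1 / r)⟩
      have hle : cos |t| ≤ cos (φ / 2) :=
        cos_le_cos_of_nonneg_of_le_pi (by linarith) (by linarith [pi_pos]) ht
      rw [cos_abs, hcos, div_le_iff₀ hr] at hle
      linarith
    refine ⟨(r, t), ⟨hr, abs_lt.1 ht⟩, ?_⟩
    ext <;> simp only [hsin, hcos] <;> field_simp
  · rintro ⟨⟨r, t⟩, ⟨hr : 0 < r, ht⟩, rfl⟩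
    refine ⟨fun h => ?_, ?_⟩
    · have := nrm2_mul_sin_mul_cos hr.le t
      dsimp only at h
      rw [h, nrm2] at this
      simp only [Prod.fst_zero, Prod.snd_zero, ne_eq, OfNat.ofNat_ne_zero, not_false_eq_true,
        zero_pow, add_zero, sqrt_zero] at this
      linarith
    · show r * cos t > nrm2 (r * sin t, r * cos t) * cos (φ / 2)
      rw [nrm2_mul_sin_mul_cos hr.le, ← cos_abs t]
      exact mul_lt_mul_of_pos_left (cos_lt_cos_of_nonneg_of_le_pi (abs_nonneg t) (by linarith)
        (abs_lt.2 ht)) hr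

lemma image_coneE_polar {φ ρ : ℝ} (hφ0 : 0 ≤ φ) (hφπ : φ ≤ π) (hρ : 0 ≤ ρ) (θ : ℝ) :
    (fun u => |dot2 u (ρ * cos θ, ρ * sin θ)| / nrm2 u) '' coneE φ =
      (fun t => ρ * |sin (t + θ)|) '' Ioo (-(φ / 2)) (φ / 2) := by
  have hvalue : ∀ r > 0, ∀ t, |dot2 (r * sin t, r * cos t) (ρ * cos θ, ρ * sin θ)| /
      nrm2 (r * sin t, r * cos t) = ρ * |sin (t + θ)| := by
    intro r hr t
    rw [nrm2_mul_sin_mul_cos hr.le, dot2, sin_add, show r * sin t * (ρ * cos θ) +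
        r * cos t * (ρ * sin θ) = r * ρ * (sin t * cos θ + cos t * sin θ) by ring,
      abs_mul, abs_mul, abs_of_pos hr, abs_of_nonneg hρ]
    field_simp
  rw [coneE_eq_image hφ0 hφπ, image_image]
  ext x
  constructor
  · rintro ⟨⟨r, t⟩, ⟨hr, ht⟩, rfl⟩
    exact ⟨t, ht, (hvalue r hr t).symm⟩
  · rintro ⟨t, ht, rfl⟩
    exact ⟨(1, t), ⟨mem_Ioi.2 one_pos, ht⟩, hvalue 1 one_pos t⟩

/-- `arccos |sin θ|` is the angle between the line through `(cos θ, sin θ)` and the `z₂`-axis. -/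
noncomputable def coneProfile (φ θ : ℝ) : ℝ := cos (max (arccos |sin θ| - φ / 2) 0)

lemma sSup_coneE_polar {φ ρ : ℝ} (hφ : φ ∈ Ioo 0 π) (hρ : 0 ≤ ρ) (θ : ℝ) :
    sSup ((fun u => |dot2 u (ρ * cos θ, ρ * sin θ)| / nrm2 u) '' coneE φ) =
      ρ * coneProfile φ θ := by
  rw [image_coneE_polar hφ.1.le hφ.2.le hρ, ← image_image (ρ * ·) fun t => |sin (t + θ)|]
  refine ((isLUB_abs_sin_add_image_Ioo (by linarith [hφ.1]) (by linarith [hφ.2]) θ).mul_left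
    hρ).csSup_eq ((nonempty_Ioo.2 ?_).image _ |>.image _)
  linarith [hφ.1]

@[fun_prop]
lemma continuous_coneProfile (φ : ℝ) : Continuous (coneProfile φ) := by
  unfold coneProfile
  fun_prop

lemma coneProfile_pos {φ : ℝ} (hφ : 0 < φ) (θ : ℝ) : 0 < coneProfile φ θ := by
  have h : arccos |sin θ| ≤ π / 2 := arccos_le_pi_div_two.2 (abs_nonneg _)
  exact cos_pos_of_mem_Ioo ⟨by linarith [le_max_right (arccos |sin θ| - φ / 2) 0, pi_pos],
    max_lt (by linarith) (by linarith [pi_pos])⟩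

lemma coneProfile_neg (φ θ : ℝ) : coneProfile φ (-θ) = coneProfile φ θ := by
  simp only [coneProfile, sin_neg, abs_neg]

lemma coneProfile_pi_sub (φ θ : ℝ) : coneProfile φ (π - θ) = coneProfile φ θ := by
  simp only [coneProfile, sin_pi_sub]

lemma coneProfile_pi_div_two_sub (φ : ℝ) {θ : ℝ} (hθ : θ ∈ Icc 0 (π / 2)) :
    coneProfile φ (π / 2 - θ) = cos (max (θ - φ / 2) 0) := by
  rw [coneProfile, sin_pi_div_two_sub, abs_of_nonneg (cos_nonneg_of_mem_Icc
    ⟨by linarith [hθ.1, pi_pos], hθ.2⟩), arccos_cos hθ.1 (by linarith [hθ.2, pi_pos])]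

lemma integral_neg_pi_pi_eq_four_mul {H : ℝ → ℝ} (hH : Continuous H)
    (hneg : ∀ θ, H (-θ) = H θ) (hpi : ∀ θ, H (π - θ) = H θ) :
    ∫ θ in -π..π, H θ = 4 * ∫ θ in 0..π / 2, H θ := by
  have hint : ∀ a b, IntervalIntegrable H volume a b := hH.intervalIntegrable
  have hleft : ∫ θ in -π..0, H θ = ∫ θ in 0..π, H θ := by
    simpa [hneg] using (intervalIntegral.integral_comp_neg (a := 0) (b := π) H).symm
  have hright : ∫ θ in π / 2..π, H θ = ∫ θ in 0..π / 2, H θ := by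
    have := intervalIntegral.integral_comp_sub_left (a := 0) (b := π / 2) H π
    rw [show π - π / 2 = π / 2 by ring, sub_zero] at this
    simpa [hpi] using this.symm
  rw [← intervalIntegral.integral_add_adjacent_intervals (hint _ 0) (hint 0 _), hleft,
    ← intervalIntegral.integral_add_adjacent_intervals (hint 0 (π / 2)) (hint _ π), hright]
  ring

lemma integral_comp_max_sub_zero {f : ℝ → ℝ} {b c : ℝ} (hb : 0 ≤ b) (hbc : b ≤ c)
    (hf : IntervalIntegrable f volume 0 (c - b)) :
    ∫ x in 0..c, f (max (x - b) 0) = b * f 0 + ∫ x in b..c, f (x - b) := by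
  have hconst : EqOn (fun x => f (max (x - b) 0)) (fun _ => f 0) (uIcc 0 b) := by
    intro x hx
    rw [uIcc_of_le hb] at hx
    simp only [max_eq_right (by linarith [hx.2] : x - b ≤ 0)]
  have hshift : EqOn (fun x => f (max (x - b) 0)) (fun x => f (x - b)) (uIcc b c) := by
    intro x hx
    rw [uIcc_of_le hbc] at hx
    simp only [max_eq_left (by linarith [hx.1] : 0 ≤ x - b)]
  have hf' : IntervalIntegrable (fun x => f (x - b)) volume b c := by
    simpa using hf.comp_sub_right b
  rw [← intervalIntegral.integral_add_adjacent_intervals (b := b)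
      ((intervalIntegrable_congr (hconst.mono uIoc_subset_uIcc)).2 intervalIntegrable_const)
      ((intervalIntegrable_congr (hshift.mono uIoc_subset_uIcc)).2 hf'),
    intervalIntegral.integral_congr hconst, intervalIntegral.integral_congr hshift,
    intervalIntegral.integral_const, smul_eq_mul, sub_zero]

lemma setOf_sSup_coneE_lt_eq_preimage_polarCoord {φ : ℝ} (hφ : φ ∈ Ioo 0 π) (w : ℝ) :
    {z : ℝ × ℝ | sSup ((fun u => |dot2 u z| / nrm2 u) '' coneE φ) < w} =
      polarCoord ⁻¹' {p | p.1 < w / coneProfile φ p.2} := by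
  ext z
  conv_lhs => rw [← polarCoord_symm_polarCoord z]
  rw [mem_ofPred_eq, polarCoord_symm_apply,
    sSup_coneE_polar (ρ := (polarCoord z).1) hφ (sqrt_nonneg _), mem_preimage, mem_ofPred_eq,
    lt_div_iff₀ (coneProfile_pos hφ.1 _)]

lemma integral_zero_pi_div_two_chi2cdf_div_coneProfile {φ : ℝ} (hφ : φ ∈ Ioo 0 π) (w : ℝ) :
    ∫ θ in 0..π / 2, chi2cdf ((w / coneProfile φ θ) ^ 2) =
      φ / 2 * chi2cdf (w ^ 2) + ∫ θ in φ / 2..π / 2, chi2cdf (w ^ 2 / cos (θ - φ / 2) ^ 2) := by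
  have hrefl := intervalIntegral.integral_comp_sub_left (a := 0) (b := π / 2)
    (fun θ => chi2cdf ((w / coneProfile φ θ) ^ 2)) (π / 2)
  rw [sub_self, sub_zero] at hrefl
  have hprofile : EqOn (fun θ => chi2cdf ((w / coneProfile φ (π / 2 - θ)) ^ 2))
      (fun θ => chi2cdf (w ^ 2 / cos (max (θ - φ / 2) 0) ^ 2)) (uIcc 0 (π / 2)) := by
    intro θ hθ
    rw [uIcc_of_le (by linarith [pi_pos])] at hθ
    simp only [coneProfile_pi_div_two_sub φ hθ, div_pow]
  have hcont : ContinuousOn (fun x => chi2cdf (w ^ 2 / cos x ^ 2)) (uIcc 0 (π / 2 - φ / 2)) := by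
    refine continuous_chi2cdf.comp_continuousOn
      (continuousOn_const.div (by fun_prop) fun x hx => pow_ne_zero 2 (cos_pos_of_mem_Ioo ?_).ne')
    rw [uIcc_of_le (by linarith [hφ.2])] at hx
    exact ⟨by linarith [hx.1, pi_pos], by linarith [hx.2, hφ.1]⟩
  rw [← hrefl, intervalIntegral.integral_congr hprofile,
    integral_comp_max_sub_zero (f := fun x => chi2cdf (w ^ 2 / cos x ^ 2))
      (by linarith [hφ.1]) (by linarith [hφ.2]) hcont.intervalIntegrable,
    cos_zero, one_pow, div_one]

/-- Let `z` be a standard bivariate normal vector, `φ ∈ (0, π)`, `w > 0`, and `E(φ)` the open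
cone of half-angle `φ/2` about the positive `z₂`-axis. Then
`P( sup_{u ∈ E(φ)} |u·z|/‖u‖ < w ) = (φ/π)·F₂(w²) +
(2/π)·∫_{φ/2}^{π/2} F₂( w² / cos²(θ - φ/2) ) dθ`. -/
theorem two_sided_coverage_probability
    (φ w : ℝ) (hφ : φ ∈ Set.Ioo 0 π) (hw : 0 < w) :
    (((gaussianReal 0 1).prod (gaussianReal 0 1))
        {z : ℝ × ℝ | sSup ((fun u => |dot2 u z| / nrm2 u) '' coneE φ) < w}).toReal =
      (φ / π) * chi2cdf (w ^ 2) +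
        (2 / π) * ∫ θ in (φ / 2)..(π / 2), chi2cdf (w ^ 2 / Real.cos (θ - φ / 2) ^ 2) := by
  have hG := coneProfile_pos hφ.1
  have hR : Continuous fun θ => w / coneProfile φ θ :=
    continuous_const.div (continuous_coneProfile φ) fun θ => (hG θ).ne'
  rw [setOf_sSup_coneE_lt_eq_preimage_polarCoord hφ,
    gaussianReal_prod_preimage_polarCoord hR.measurable fun θ => (div_pos hw (hG θ)).le,
    integral_neg_pi_pi_eq_four_mul (H := fun θ => chi2cdf ((w / coneProfile φ θ) ^ 2))
      (continuous_chi2cdf.comp (hR.pow 2))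
      (fun θ => by rw [coneProfile_neg]) (fun θ => by rw [coneProfile_pi_sub]),
    integral_zero_pi_div_two_chi2cdf_div_coneProfile hφ]
  field_simp
  ring
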